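/- arXiv:1411.6226 — 2 statements merged into one kernel-verified Lean document; each statement's English description precedes it below -/
import Mathlib

section
/- Let H be a finite digraph with distinct vertices s_0, t_0, let n, k ≥ 0 be integers, let K_n be the set of k-tuples of nonnegative integers whose sum is at most n, and let l : E(H) → K_n. For a path P of H with edge set {e_1,…,e_p}, define l(P) = l(e_1)+…+l(e_p). Define Q_0(s_0) = {(0,…,0)}, Q_0(v) = ∅ for every other vertex v, and for i ≥ 1 let Q_i(v) be the set of vectors that are minimal under componentwise ≤ among the vectors that either belong to Q_{i−1}(v) or are expressible as l(e)+x for some edge e = uv of H and some x ∈ Q_{i−1}(u). Then Q_{|V(H)|}(t_0) equals the set of vectors that are minimal under componentwise ≤ in the set { l(P) : P a path of H from s_0 to t_0 }. -/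
open List

/-! Basic digraph/path definitions.  A digraph on `V` is a relation `G : V → V → Prop`
(looplessness is expressed by `Irreflexive G`).  A (directed) path is a nonempty list of
distinct vertices in which consecutive vertices are joined by edges of `G`. -/

/-- `uv` is an edge of the path `P`, i.e. `u,v` are consecutive on `P`. -/
def PEdge {V : Type} (P : List V) (u v : V) : Prop := [u, v] <:+: P

/-- `P` is a directed path of the digraph `G`. -/
def IsPath {V : Type} (G : V → V → Prop) (P : List V) : Prop :=
  P ≠ [] ∧ P.Nodup ∧ P.Chain' G

/-- `P` is a minimal path of `G`: for every edge `v_i v_j` of `G` between vertices of `P`,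
`j ≤ i + 1`. -/
def IsMinimal {V : Type} (G : V → V → Prop) (P : List V) : Prop :=
  ∀ i j : Fin P.length, G (P.get i) (P.get j) → (j : ℕ) ≤ (i : ℕ) + 1

/-- `G` is `d`-path-dominant. -/
def PathDominant {V : Type} (d : ℕ) (G : V → V → Prop) : Prop :=
  ∀ P : List V, IsPath G P → IsMinimal G P → P.length = d →
    ∀ v : V, v ∈ P ∨ (∃ w ∈ P, G v w) ∨ (∃ w ∈ P, G w v)

/-- A linkage: a tuple of pairwise vertex-disjoint paths. -/
def IsLinkage {V : Type} (G : V → V → Prop) {k : ℕ} (L : Fin k → List V) : Prop :=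
  (∀ i, IsPath G (L i)) ∧ ∀ i j : Fin k, i ≠ j → ∀ v, v ∈ L i → v ∉ L j

/-- `v` is `Q`-outward: `v ∉ Q` and no vertex of `Q` is adjacent from `v`. -/
def Outward {V : Type} (G : V → V → Prop) (Q : List V) (v : V) : Prop :=
  v ∉ Q ∧ ∀ w ∈ Q, ¬ G v w

/-- `v` is `Q`-inward: `v ∉ Q` and no vertex of `Q` is adjacent to `v`. -/
def Inward {V : Type} (G : V → V → Prop) (Q : List V) (v : V) : Prop :=
  v ∉ Q ∧ ∀ w ∈ Q, ¬ G w v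

section Inhab
variable {V : Type} [Inhabited V]

/-- A linkage for the problem instance `(G, s₁, t₁, …, s_k, t_k)`. -/
def IsLinkageFor (G : V → V → Prop) {k : ℕ} (s t : Fin k → V) (L : Fin k → List V) : Prop :=
  IsLinkage G L ∧ ∀ i, (L i).head! = s i ∧ (L i).getLast! = t i

/-- `x` is a quality: there is an `x`-linkage for the instance. -/
def IsQuality (G : V → V → Prop) {k : ℕ} (s t : Fin k → V) (x : Fin k → ℕ) : Prop :=
  ∃ L : Fin k → List V, IsLinkageFor G s t L ∧ ∀ i, (L i).length = x i

/-- `x` is a key quality: a quality not strictly dominating any other quality. -/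
def IsKeyQuality (G : V → V → Prop) {k : ℕ} (s t : Fin k → V) (x : Fin k → ℕ) : Prop :=
  IsQuality G s t x ∧ ¬ ∃ y : Fin k → ℕ, IsQuality G s t y ∧ y ≤ x ∧ y ≠ x

/-- `v` is an internal vertex of the linkage `M`. -/
def Internal {k : ℕ} (M : Fin k → List V) (v : V) : Prop :=
  (∃ i, v ∈ M i) ∧ ∀ i, v ≠ (M i).head! ∧ v ≠ (M i).getLast!

/-- The linkage `M` is internally disjoint from the linkage `L`. -/
def InternallyDisjointFrom {k l : ℕ} (M : Fin k → List V) (L : Fin l → List V) : Prop :=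
  ∀ v, Internal M v → ∀ i, v ∉ L i

/-- A planar `(Q,R)`-matching of cardinality `n`. -/
def IsPlanarMatching (G : V → V → Prop) (Q R : List V) {n : ℕ} (M : Fin n → List V) : Prop :=
  IsLinkage G M ∧ (∀ j, (M j).length = 2 ∨ (M j).length = 3) ∧
  (List.ofFn fun j => (M j).head!).Sublist Q ∧
  (List.ofFn fun j => (M j).getLast!).Sublist R

/-- A planar `(Q,R)`-matching is `s`-spaced. -/
def SSpaced (Q R : List V) {n : ℕ} (M : Fin n → List V) (s : ℕ) : Prop :=
  (∀ W : List V, W <:+: Q → W.length ≤ s →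
    ∀ j j' : Fin n, (∃ v ∈ W, v ∈ M j) → (∃ v ∈ W, v ∈ M j') → j = j') ∧
  (∀ W : List V, W <:+: R → W.length ≤ s →
    ∀ j j' : Fin n, (∃ v ∈ W, v ∈ M j) → (∃ v ∈ W, v ∈ M j') → j = j')

/-- `A(L)`: vertices outside `V(L)` that are `(M_j ∖ t(M_j))`-inward for some `j`
with `t(M_j) ≠ t_j`. -/
def RailA (G : V → V → Prop) {k : ℕ} (t : Fin k → V) (L : Fin k → List V) : Set V :=
  {v | (∀ i, v ∉ L i) ∧ ∃ j, (L j).getLast! ≠ t j ∧ ∀ w ∈ (L j).dropLast, ¬ G w v}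

/-- `B(L)`: vertices outside `V(L)` that are `(M_j ∖ s(M_j))`-outward for some `j`
with `s(M_j) ≠ s_j`. -/
def RailB (G : V → V → Prop) {k : ℕ} (s : Fin k → V) (L : Fin k → List V) : Set V :=
  {v | (∀ i, v ∉ L i) ∧ ∃ j, (L j).head! ≠ s j ∧ ∀ w ∈ (L j).tail, ¬ G v w}

/-- The confusion of the linkage `L`, namely `|A(L) ∩ B(L)|`. -/
noncomputable def Confusion (G : V → V → Prop) {k : ℕ} (s t : Fin k → V)
    (L : Fin k → List V) : ℕ :=
  (RailA G t L ∩ RailB G s L).ncard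

/-- `(L, X, Y)` is a `(k,m,c)`-rail in the problem instance. -/
def IsRail (G : V → V → Prop) {k : ℕ} (s t : Fin k → V) (m c : ℕ)
    (L : Fin k → List V) (X Y : Set V) : Prop :=
  IsLinkage G L ∧
  (∀ j, (L j).length ≤ 2*m ∧
    ((L j).length < 2*m → (L j).head! = s j ∨ (L j).getLast! = t j)) ∧
  Confusion G s t L ≤ c ∧
  Disjoint X Y ∧
  X ⊆ RailA G t L ∧ Y ⊆ RailB G s L ∧ X ∪ Y = RailA G t L ∪ RailB G s L

end Inhab

/-- The data of a potential rail: a `k`-tuple of paths together with two vertex sets. -/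
abbrev RailT (V : Type) (k : ℕ) := (Fin k → List V) × Set V × Set V

section Inhab2
variable {V : Type} [Inhabited V]

/-- The edge relation `(L,X,Y) → (L',X',Y')` between distinct rails. -/
def RailStep (G : V → V → Prop) {k : ℕ} (r r' : RailT V k) : Prop :=
  r ≠ r' ∧
  (∀ i, ∃ W : List V, IsPath G W ∧ W.head! = (r.1 i).head! ∧
    W.getLast! = (r'.1 i).getLast! ∧
    (∀ v, v ∈ W ↔ v ∈ r.1 i ∨ v ∈ r'.1 i) ∧
    (∀ u v, PEdge W u v ↔ PEdge (r.1 i) u v ∨ PEdge (r'.1 i) u v)) ∧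
  (∀ i, ∀ v ∈ r'.1 i, v ∈ r.1 i ∨ v ∈ r.2.1) ∧
  (∀ i, ∀ v ∈ r.1 i, v ∈ r'.1 i ∨ v ∈ r'.2.2) ∧
  r'.2.1 ⊆ r.2.1 ∧ r.2.2 ⊆ r'.2.2

/-- A path from `s₀` to `t₀` in the `(k,m,c)`-tracker, recorded by its list of
intermediate rail vertices. -/
def IsTrackerPath (G : V → V → Prop) {k : ℕ} (s t : Fin k → V) (m c : ℕ)
    (rs : List (RailT V k)) : Prop :=
  rs ≠ [] ∧ rs.Nodup ∧ rs.Chain' (RailStep G) ∧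
  (∀ r ∈ rs, IsRail G s t m c r.1 r.2.1 r.2.2) ∧
  (∀ r ∈ rs.head?, ∀ j, (r.1 j).head! = s j) ∧
  (∀ r ∈ rs.getLast?, ∀ j, (r.1 j).getLast! = t j)

end Inhab2

/-- A tracker path traces the linkage `P`: each `P j` is the union (as a digraph) of the
`j`-th members of the rails of the path. -/
def Traces {V : Type} {k : ℕ} (rs : List (RailT V k)) (P : Fin k → List V) : Prop :=
  ∀ j, (∀ v, v ∈ P j ↔ ∃ r ∈ rs, v ∈ r.1 j) ∧
       (∀ u v, PEdge (P j) u v ↔ ∃ r ∈ rs, PEdge (r.1 j) u v)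

section Dec
variable {V : Type} [DecidableEq V]

/-- `V(L)`, the set of vertices of the linkage `L`, as a finset. -/
def LV {k : ℕ} (L : Fin k → List V) : Finset V :=
  Finset.univ.biUnion fun i => (L i).toFinset

/-- `B` is acceptable for the linkage `L` (with parameters `d, k`). -/
def Acceptable [Inhabited V] (G : V → V → Prop) (d k : ℕ) (L : Fin k → List V)
    (B : Finset V) : Prop :=
  (∀ j : Fin k, ∀ u v : V, PEdge (L j) u v → v ∈ B → u ∈ B) ∧
  ∀ i j : Fin k, ¬ ∃ M : Fin ((k-1)*d + k^2 + 2) → List V,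
    IsPlanarMatching G ((L i).filter (· ∈ B)) ((L j).filter (· ∉ B)) M ∧
    InternallyDisjointFrom M L

/-- Labels along a tracker path, after the first rail: consecutive rails `r, r'`
contribute `|V(M'_j) ∖ V(M_j)|` in coordinate `j`. -/
def labelFrom {k : ℕ} : RailT V k → List (RailT V k) → (Fin k → ℕ)
  | _, [] => fun _ => 0
  | r, r' :: rest => (fun j => ((r'.1 j).toFinset \ (r.1 j).toFinset).card) + labelFrom r' rest

/-- The total label `l(P)` of a tracker path with rail list `rs`: the edge from `s₀`
contributes `|V(M_j)|`, each rail-to-rail edge contributes the difference counts, and the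
edge to `t₀` contributes `0`. -/
def pathLabel {k : ℕ} : List (RailT V k) → (Fin k → ℕ)
  | [] => fun _ => 0
  | r :: rest => (fun j => (r.1 j).toFinset.card) + labelFrom r rest

/-- `Q_{p,j}`: the maximal subpath of `P` with at most `m` vertices whose last vertex is
the last vertex of `P` among `v_1, …, v_p` (null if there is none). -/
def Qseg (m : ℕ) (e : List V) (p : ℕ) (P : List V) : List V :=
  (P.filter (· ∈ e.take p)).drop ((P.filter (· ∈ e.take p)).length - m)

/-- `R_{p,j}`: the maximal subpath of `P` with at most `m` vertices whose first vertex is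
the first vertex of `P` among `v_{p+1}, …, v_n` (null if there is none). -/
def Rseg (m : ℕ) (e : List V) (p : ℕ) (P : List V) : List V :=
  (P.filter (· ∈ e.drop p)).take m

/-- `M_{p,j} = Q_{p,j} ∪ R_{p,j}` (together with the connecting edge of `P` when both
are non-null). -/
def Mseg (m : ℕ) (e : List V) (p : ℕ) (P : List V) : List V :=
  Qseg m e p P ++ Rseg m e p P

end Dec

/-- The set of minimal vectors (under componentwise `≤`) of a set of `k`-tuples. -/
def minimalsIn {k : ℕ} (S : Set (Fin k → ℕ)) : Set (Fin k → ℕ) :=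
  {x | x ∈ S ∧ ¬ ∃ y ∈ S, y ≤ x ∧ y ≠ x}

/-- The dynamic-programming sets `Q_i(v)` of the vector-valued shortest path algorithm. -/
def Qset {W : Type} [DecidableEq W] {k : ℕ} (H : W → W → Prop) (l : W → W → Fin k → ℕ)
    (s0 : W) : ℕ → W → Set (Fin k → ℕ)
  | 0, v => if v = s0 then {fun _ => 0} else ∅
  | i+1, v => minimalsIn (Qset H l s0 i v ∪
      {z | ∃ u x, H u v ∧ x ∈ Qset H l s0 i u ∧ z = l u v + x})

/-- `l(P)`: the sum of the labels of the edges of a path, listed by its vertices. -/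
def pathCost {W : Type} {k : ℕ} (l : W → W → Fin k → ℕ) : List W → (Fin k → ℕ)
  | [] => fun _ => 0
  | [_] => fun _ => 0
  | u :: v :: rest => l u v + pathCost l (v :: rest)

/-! By induction on `i`, `Q_i(v)` is an antichain of costs of walks from `s₀` to `v`, and the cost
of every walk from `s₀` to `v` with at most `i` edges dominates some vector of `Q_i(v)`. Cutting
the closed subwalks out of a walk leaves a path with the same ends and, labels being nonnegative,
no larger cost; and a path has fewer than `|V(H)|` edges. Hence `Q_{|V(H)|}(t₀)` and the set of
path costs each dominate the other, which for an antichain means it is the set of minimal path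
costs. -/

section PathCost

variable {W : Type} {k : ℕ} (l : W → W → Fin k → ℕ)

@[simp] lemma pathCost_nil : pathCost l [] = 0 := rfl

@[simp] lemma pathCost_singleton (a : W) : pathCost l [a] = 0 := rfl

@[simp] lemma pathCost_cons_cons (a b : W) (P : List W) :
    pathCost l (a :: b :: P) = l a b + pathCost l (b :: P) := rfl

lemma pathCost_append_cons (P Q : List W) (x : W) :
    pathCost l (P ++ x :: Q) = pathCost l (P ++ [x]) + pathCost l (x :: Q) := by
  induction P with
  | nil => simp
  | cons a P ih =>
    cases P with
    | nil => simp
    | cons b P => simp only [cons_append, pathCost_cons_cons] at ih ⊢; rw [ih, add_assoc]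

lemma pathCost_concat {P : List W} {u : W} (hu : P.getLast? = some u) (v : W) :
    pathCost l (P ++ [v]) = pathCost l P + l u v := by
  obtain ⟨P, rfl⟩ := List.getLast?_eq_some_iff.mp hu
  rw [append_assoc, singleton_append, pathCost_append_cons]
  simp

lemma pathCost_append_cons_le_append_cons_append_cons (A B C : List W) (x : W) :
    pathCost l (A ++ x :: C) ≤ pathCost l (A ++ x :: (B ++ x :: C)) := by
  rw [pathCost_append_cons l A C x, pathCost_append_cons l A (B ++ x :: C) x,
    ← cons_append, pathCost_append_cons l (x :: B) C x]
  exact add_le_add_right le_add_self _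

end PathCost

lemma List.exists_eq_append_cons_append_cons_of_not_nodup {α : Type*} {P : List α}
    (h : ¬ P.Nodup) : ∃ A B C x, P = A ++ x :: (B ++ x :: C) := by
  obtain ⟨x, hx⟩ : ∃ x, [x, x] <+ P := by simpa [List.nodup_iff_sublist] using h
  obtain ⟨R₁, R₂, rfl, h₁, h₂⟩ := List.cons_sublist_iff.mp hx
  obtain ⟨A, B, rfl⟩ := List.append_of_mem h₁
  obtain ⟨C, D, rfl⟩ := List.append_of_mem (List.singleton_sublist.mp h₂)
  exact ⟨A, B ++ C, D, x, by simp⟩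

lemma exists_isPath_pathCost_le {W : Type} {k : ℕ} (H : W → W → Prop) (l : W → W → Fin k → ℕ)
    {P : List W} (hne : P ≠ []) (hP : P.IsChain H) :
    ∃ Q, IsPath H Q ∧ Q.head? = P.head? ∧ Q.getLast? = P.getLast? ∧
      pathCost l Q ≤ pathCost l P := by
  induction hn : P.length using Nat.strong_induction_on generalizing P with
  | _ n ih =>
  by_cases hnd : P.Nodup
  · exact ⟨P, ⟨hne, hnd, hP⟩, rfl, rfl, le_rfl⟩
  obtain ⟨A, B, C, x, rfl⟩ := List.exists_eq_append_cons_append_cons_of_not_nodup hnd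
  have hchain : (A ++ x :: C).IsChain H := by
    have hsplit := List.isChain_split.mp hP
    exact List.isChain_split.mpr ⟨hsplit.1, (List.isChain_cons_split.mp hsplit.2).2⟩
  obtain ⟨Q, hQ, hhead, hlast, hcost⟩ :=
    ih _ (by simp [← hn]) (by simp) hchain rfl
  refine ⟨Q, hQ, ?_, ?_, hcost.trans (pathCost_append_cons_le_append_cons_append_cons l A B C x)⟩
  · rw [hhead]; cases A <;> simp
  · rw [hlast, getLast?_append_cons, getLast?_append_cons, ← cons_append, getLast?_append_cons]

lemma minimalsIn_eq_setOf_minimal {k : ℕ} (S : Set (Fin k → ℕ)) :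
    minimalsIn S = {x | Minimal (· ∈ S) x} := by
  ext x
  simp only [minimalsIn, Set.mem_ofPred_eq, minimal_iff]
  grind

lemma exists_mem_minimalsIn_le {k : ℕ} {S : Set (Fin k → ℕ)} {x : Fin k → ℕ} (hx : x ∈ S) :
    ∃ y ∈ minimalsIn S, y ≤ x := by
  obtain ⟨y, hyx, hy⟩ := exists_minimal_le_of_wellFoundedLT (· ∈ S) x hx
  exact ⟨y, minimalsIn_eq_setOf_minimal S ▸ hy, hyx⟩

lemma IsAntichain.eq_setOf_minimal_of_forall_exists_le {α : Type*} [PartialOrder α]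
    {s t : Set α} (ht : IsAntichain (· ≤ ·) t) (hts : ∀ a ∈ t, ∃ b ∈ s, b ≤ a)
    (hst : ∀ b ∈ s, ∃ a ∈ t, a ≤ b) :
    t = {x | Minimal (· ∈ s) x} := by
  ext x
  constructor
  · intro hx
    obtain ⟨b, hb, hbx⟩ := hts x hx
    obtain ⟨a, ha, hab⟩ := hst b hb
    obtain rfl : a = x := ht.eq ha hx (hab.trans hbx)
    refine ⟨le_antisymm hbx hab ▸ hb, fun c hc hca => ?_⟩
    obtain ⟨d, hd, hdc⟩ := hst c hc
    exact ht.eq hd hx (hdc.trans hca) ▸ hdc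
  · intro hx
    obtain ⟨a, ha, hax⟩ := hst x hx.prop
    obtain ⟨b, hb, hba⟩ := hts a ha
    have hxb : x ≤ b := hx.2 hb (hba.trans hax)
    exact le_antisymm hax (hxb.trans hba) ▸ ha

section Qset

variable {W : Type} [DecidableEq W] {k : ℕ} (H : W → W → Prop) (l : W → W → Fin k → ℕ) (s0 : W)

lemma isAntichain_Qset (i : ℕ) (v : W) : IsAntichain (· ≤ ·) (Qset H l s0 i v) := by
  cases i with
  | zero =>
    apply Set.Subsingleton.isAntichain
    unfold Qset
    split_ifs
    exacts [Set.subsingleton_singleton, Set.subsingleton_empty]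
  | succ i =>
    rw [Qset, minimalsIn_eq_setOf_minimal]
    exact setOfPred_minimal_antichain _

lemma exists_isChain_pathCost_eq_of_mem_Qset {i : ℕ} {v : W} {x : Fin k → ℕ}
    (hx : x ∈ Qset H l s0 i v) :
    ∃ P : List W, P.IsChain H ∧ P.head? = some s0 ∧ P.getLast? = some v ∧ pathCost l P = x := by
  induction i generalizing v x with
  | zero =>
    unfold Qset at hx
    split_ifs at hx with hv
    · subst hv hx
      exact ⟨[v], List.isChain_singleton v, rfl, rfl, rfl⟩
    · exact absurd hx (Set.notMem_empty x)
  | succ i ih =>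
    rcases hx.1 with hx | ⟨u, y, huv, hy, rfl⟩
    · exact ih hx
    obtain ⟨P, hP, hhead, hlast, rfl⟩ := ih hy
    have hne : P ≠ [] := by rintro rfl; simp at hhead
    refine ⟨P ++ [v], hP.append (List.isChain_singleton v) ?_, ?_, by simp, ?_⟩
    · simpa [hlast]
    · rwa [List.head?_append_of_ne_nil _ hne]
    · rw [pathCost_concat l hlast, add_comm]

lemma zero_mem_Qset (i : ℕ) : 0 ∈ Qset H l s0 i s0 := by
  induction i with
  | zero => simp only [Qset, if_true]; rfl
  | succ i ih =>
    exact ⟨Or.inl ih, fun ⟨y, _, hy, hne⟩ => hne (le_antisymm hy fun _ => Nat.zero_le _)⟩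

lemma exists_mem_Qset_succ_le_add {i : ℕ} {u v : W} (huv : H u v) {y : Fin k → ℕ}
    (hy : y ∈ Qset H l s0 i u) : ∃ z ∈ Qset H l s0 (i + 1) v, z ≤ l u v + y :=
  exists_mem_minimalsIn_le (Or.inr ⟨u, y, huv, hy, rfl⟩)

lemma exists_mem_Qset_le_pathCost {P : List W} (hP : P.IsChain H) (hhead : P.head? = some s0)
    {i : ℕ} {v : W} (hlast : P.getLast? = some v) (hlen : P.length ≤ i + 1) :
    ∃ y ∈ Qset H l s0 i v, y ≤ pathCost l P := by
  induction P using List.reverseRecOn generalizing i v with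
  | nil => simp at hhead
  | append_singleton P w ih =>
    obtain rfl : w = v := by simpa using hlast
    rcases P.eq_nil_or_concat' with rfl | ⟨P', u, rfl⟩
    · obtain rfl : w = s0 := by simpa using hhead
      exact ⟨0, zero_mem_Qset H l w i, by simp⟩
    have hu : (P' ++ [u]).getLast? = some u := by simp
    obtain ⟨hchain, -, huw⟩ := List.isChain_append.mp hP
    obtain ⟨j, rfl⟩ : ∃ j, i = j + 1 := Nat.exists_eq_add_one.mpr (by simp at hlen; omega)
    obtain ⟨y, hy, hyle⟩ := ih hchain (by simpa using hhead) hu (by simp at hlen ⊢; omega)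
    obtain ⟨z, hz, hzle⟩ := exists_mem_Qset_succ_le_add H l s0 (huw u hu w rfl) hy
    refine ⟨z, hz, hzle.trans ?_⟩
    rw [pathCost_concat l hu, add_comm _ (l u w)]
    exact add_le_add_right hyle _

end Qset

theorem stmt16_general {W : Type} [Fintype W] [DecidableEq W]
    (H : W → W → Prop)
    (s0 t0 : W) (k : ℕ)
    (l : W → W → Fin k → ℕ) :
    Qset H l s0 (Fintype.card W) t0 =
      minimalsIn {z | ∃ P : List W, IsPath H P ∧ P.head? = some s0 ∧
        P.getLast? = some t0 ∧ pathCost l P = z} := by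
  rw [minimalsIn_eq_setOf_minimal]
  refine (isAntichain_Qset H l s0 _ t0).eq_setOf_minimal_of_forall_exists_le ?_ ?_
  · intro x hx
    obtain ⟨P, hP, hhead, hlast, rfl⟩ := exists_isChain_pathCost_eq_of_mem_Qset H l s0 hx
    obtain ⟨Q, hQ, hQhead, hQlast, hcost⟩ :=
      exists_isPath_pathCost_le H l (by rintro rfl; simp at hhead) hP
    exact ⟨pathCost l Q, ⟨Q, hQ, hQhead.trans hhead, hQlast.trans hlast, rfl⟩, hcost⟩
  · rintro _ ⟨P, hP, hhead, hlast, rfl⟩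
    exact exists_mem_Qset_le_pathCost H l s0 hP.2.2 hhead hlast
      (hP.2.1.length_le_card.trans (Nat.le_succ _))

theorem stmt16 {W : Type} [Fintype W] [DecidableEq W]
    (H : W → W → Prop) (hH : Irreflexive H)
    (s0 t0 : W) (hst : s0 ≠ t0) (n k : ℕ)
    (l : W → W → Fin k → ℕ) (hl : ∀ u v, H u v → (∑ i, l u v i) ≤ n) :
    Qset H l s0 (Fintype.card W) t0 =
      minimalsIn {z | ∃ P : List W, IsPath H P ∧ P.head? = some s0 ∧
        P.getLast? = some t0 ∧ pathCost l P = z} :=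
  stmt16_general H s0 t0 k l
end

section
/- Let d,k ≥ 1 be integers, set c_0 = (k−1)d+k²+2 and m = c_0·d+1. Let (G,s_1,t_1,…,s_k,t_k) be a problem instance where G is a d-path-dominant digraph, let L=(P_1,…,P_k) be a linkage for it, and let (v_1,…,v_n) be an enumeration of V(L) such that: (a) for each h and each edge v_pv_q of P_h, p < q; and (b) for all 1 ≤ h,i ≤ k and 1 ≤ p ≤ n−1, for every subpath Q of P_h|{v_1,…,v_p} with m−1 vertices and every subpath R of P_i|{v_{p+1},…,v_n} with m−1 vertices, at most c_0(2k+1) vertices of G are both Q-outward and R-inward. For 0 ≤ p ≤ n and 1 ≤ j ≤ k define: Q_{p,j} to be the maximal subpath of P_j with at most m vertices whose last vertex is v_q, where q ≤ p is maximum with v_q ∈ V(P_j) (null if no vertex of P_j lies among v_1,…,v_p); R_{p,j} to be the maximal subpath of P_j with at most m vertices whose first vertex is v_r, where r > p is minimum with v_r ∈ V(P_j) (null if no vertex of P_j lies among v_{p+1},…,v_n); and M_{p,j} to be Q_{p,j}∪R_{p,j} together with the edge of P_j from the last vertex of Q_{p,j} to the first vertex of R_{p,j} when both are non-null, and to be the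 non-null one otherwise. Then for every p with 0 ≤ p ≤ n, the linkage L_p=(M_{p,1},…,M_{p,k}) has confusion at most c_0(2k+1)k². -/
open List

/-! A vertex of `A(L_p) ∩ B(L_p)` is witnessed by a pair `(i, j)` with `s(M_{p,i}) ≠ s_i` and
`t(M_{p,j}) ≠ t_j`, and it is then outward from `Q_{p,i}` minus its first vertex and inward to
`R_{p,j}` minus its last vertex. By (a) the vertices of `P_i` among `v_1, …, v_p` form an initial
segment of `P_i`, so `s(M_{p,i}) ≠ s_i` forces `Q_{p,i}` to have all `m` vertices (and `p ≥ 1`);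
symmetrically `t(M_{p,j}) ≠ t_j` forces `|R_{p,j}| = m` (and `p < n`). Hypothesis (b) then bounds
the contribution of each of the `k²` pairs by `c_0(2k+1)`. -/

namespace List

variable {α : Type}

theorem IsPrefix.head!_eq [Inhabited α] {l₁ l₂ : List α} (h : l₁ <+: l₂) (h₁ : l₁ ≠ []) :
    l₁.head! = l₂.head! := by
  obtain ⟨t, rfl⟩ := h
  exact (head!_append t h₁).symm

theorem getLast!_append_of_ne_nil [Inhabited α] (l₁ : List α) {l₂ : List α} (h₂ : l₂ ≠ []) :
    (l₁ ++ l₂).getLast! = l₂.getLast! := by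
  simp [getLast!_eq_getLast?_getD, getLast?_append, getLast?_eq_some_getLast h₂]

theorem IsSuffix.getLast!_eq [Inhabited α] {l₁ l₂ : List α} (h : l₁ <:+ l₂) (h₁ : l₁ ≠ []) :
    l₁.getLast! = l₂.getLast! := by
  obtain ⟨t, rfl⟩ := h
  exact (getLast!_append_of_ne_nil t h₁).symm

theorem mem_tail_append_of_mem_tail {l₁ l₂ : List α} {a : α} (h : a ∈ l₁.tail) :
    a ∈ (l₁ ++ l₂).tail := by
  cases l₁ with
  | nil => simp at h
  | cons b l₁ => exact mem_append_left _ h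

theorem mem_dropLast_append_of_mem_dropLast {l₁ l₂ : List α} {a : α} (h : a ∈ l₂.dropLast) :
    a ∈ (l₁ ++ l₂).dropLast := by
  rcases eq_or_ne l₂ [] with rfl | h₂
  · simp at h
  · rw [dropLast_append_of_ne_nil h₂]
    exact mem_append_right _ h

theorem isChain_pedge : ∀ l : List α, l.IsChain (PEdge l)
  | [] => .nil
  | [_] => .singleton _
  | a :: b :: l => .cons_cons ⟨[], l, rfl⟩
      ((isChain_pedge (b :: l)).imp fun _ _ h => h.trans (suffix_cons a _).isInfix)

theorem filter_isPrefix_of_pairwise {S : α → Prop} [DecidablePred S] :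
    ∀ {l : List α}, l.Pairwise (fun a b => S b → S a) → l.filter (fun a => decide (S a)) <+: l
  | [], _ => nil_prefix
  | a :: l, h => by
    rw [pairwise_cons] at h
    by_cases ha : S a
    · rw [filter_cons_of_pos (by simpa using ha)]
      exact (prefix_cons_inj a).2 (filter_isPrefix_of_pairwise h.2)
    · rw [filter_cons_of_neg (by simpa using ha),
        filter_eq_nil_iff.2 fun b hb hSb => ha (h.1 b hb (by simpa using hSb))]
      exact nil_prefix

theorem filter_isSuffix_of_pairwise {S : α → Prop} [DecidablePred S] {l : List α}
    (h : l.Pairwise fun a b => S a → S b) : l.filter (fun a => decide (S a)) <:+ l := by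
  rw [← reverse_prefix, ← filter_reverse]
  exact filter_isPrefix_of_pairwise (pairwise_reverse.2 h)

theorem pairwise_of_forall_pedge {r : α → α → Prop}
    (htrans : ∀ a b c, r a b → r b c → r a c) {l : List α} (h : ∀ a b, PEdge l a b → r a b) :
    l.Pairwise r :=
  @IsChain.pairwise _ _ _ ⟨htrans _ _ _⟩ ((isChain_pedge l).imp h)

theorem mem_take_or_mem_drop {e : List α} {v : α} (hv : v ∈ e) (p : ℕ) :
    v ∈ e.take p ∨ v ∈ e.drop p := by
  rw [← mem_append, take_append_drop]
  exact hv

end List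

theorem Set.ncard_setOf_and_le {α : Type} {P : Prop} {S : α → Prop} {c : ℕ}
    (h : P → {v | S v}.ncard ≤ c) : {v | P ∧ S v}.ncard ≤ c := by
  by_cases hP : P
  · simpa [hP] using h hP
  · simp [hP]

section Enumeration

variable {α : Type} [DecidableEq α] {e P : List α}

theorem filter_mem_take_isPrefix (hmem : ∀ v ∈ P, v ∈ e)
    (hord : ∀ p q : Fin e.length, PEdge P (e.get p) (e.get q) → (p : ℕ) < q) (n : ℕ) :
    P.filter (· ∈ e.take n) <+: P := by
  refine filter_isPrefix_of_pairwise <|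
    pairwise_of_forall_pedge (fun _ _ _ h₁ h₂ hc => h₁ (h₂ hc)) fun a b hab hb => ?_
  obtain ⟨i, hi, rfl⟩ := mem_take_iff_getElem.1 hb
  obtain ⟨j, hj, rfl⟩ := getElem_of_mem (hmem a (hab.subset (by simp)))
  have : j < i := hord ⟨j, hj⟩ ⟨i, by omega⟩ hab
  exact mem_take_iff_getElem.2 ⟨j, by omega, rfl⟩

theorem filter_mem_drop_isSuffix (hmem : ∀ v ∈ P, v ∈ e)
    (hord : ∀ p q : Fin e.length, PEdge P (e.get p) (e.get q) → (p : ℕ) < q) (n : ℕ) :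
    P.filter (· ∈ e.drop n) <:+ P := by
  refine filter_isSuffix_of_pairwise <|
    pairwise_of_forall_pedge (fun _ _ _ h₁ h₂ hc => h₂ (h₁ hc)) fun a b hab ha => ?_
  obtain ⟨i, hi, rfl⟩ := mem_drop_iff_getElem.1 ha
  obtain ⟨j, hj, rfl⟩ := getElem_of_mem (hmem b (hab.subset (by simp)))
  have : n + i < j := hord ⟨n + i, by omega⟩ ⟨j, hj⟩ hab
  exact mem_drop_iff_getElem.2 ⟨j - n, by omega, by congr 1; omega⟩

variable {m p : ℕ}

theorem one_le_of_Qseg_ne_nil (h : Qseg m e p P ≠ []) : 1 ≤ p := by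
  rcases Nat.eq_zero_or_pos p with rfl | hp
  · simp [Qseg] at h
  · exact hp

theorem lt_length_of_Rseg_ne_nil (h : Rseg m e p P ≠ []) : p < e.length := by
  by_contra! hp
  simp [Rseg, drop_eq_nil_of_le hp] at h

theorem Qseg_tail_isInfix : (Qseg m e p P).tail <:+: P.filter (· ∈ e.take p) :=
  ((tail_suffix _).trans (drop_suffix _ _)).isInfix

theorem Rseg_dropLast_isInfix : (Rseg m e p P).dropLast <:+: P.filter (· ∈ e.drop p) :=
  ((dropLast_prefix _).trans (take_prefix _ _)).isInfix

variable [Inhabited α]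

theorem Qseg_length_eq_of_head!_ne (hP : P ≠ []) (hmem : ∀ v ∈ P, v ∈ e)
    (hpre : P.filter (· ∈ e.take p) <+: P) (h : (Mseg m e p P).head! ≠ P.head!) :
    (Qseg m e p P).length = m := by
  by_contra hne
  have hshort : (P.filter (· ∈ e.take p)).length < m := by
    simp only [Qseg, length_drop] at hne
    omega
  have hQ : Qseg m e p P = P.filter (· ∈ e.take p) := by
    rw [Qseg, Nat.sub_eq_zero_of_le hshort.le, drop_zero]
  apply h
  rcases eq_or_ne (P.filter (· ∈ e.take p)) [] with hnil | hne'
  · have hall : P.filter (· ∈ e.drop p) = P := filter_eq_self.2 fun v hv => by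
      simpa using (mem_take_or_mem_drop (hmem v hv) p).resolve_left
        (by simpa using filter_eq_nil_iff.1 hnil v hv)
    rw [Mseg, hQ, hnil, nil_append, Rseg, hall]
    exact (take_prefix m P).head!_eq (by
      simp only [ne_eq, take_eq_nil_iff, hP, or_false]
      omega)
  · rw [Mseg, hQ, head!_append _ hne']
    exact hpre.head!_eq hne'

theorem Rseg_length_eq_of_getLast!_ne (hP : P ≠ []) (hmem : ∀ v ∈ P, v ∈ e)
    (hsuf : P.filter (· ∈ e.drop p) <:+ P) (h : (Mseg m e p P).getLast! ≠ P.getLast!) :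
    (Rseg m e p P).length = m := by
  by_contra hne
  have hshort : (P.filter (· ∈ e.drop p)).length < m := by
    simp only [Rseg, length_take] at hne
    omega
  have hR : Rseg m e p P = P.filter (· ∈ e.drop p) := take_of_length_le hshort.le
  apply h
  rcases eq_or_ne (P.filter (· ∈ e.drop p)) [] with hnil | hne'
  · have hall : P.filter (· ∈ e.take p) = P := filter_eq_self.2 fun v hv => by
      simpa using (mem_take_or_mem_drop (hmem v hv) p).resolve_right
        (by simpa using filter_eq_nil_iff.1 hnil v hv)
    rw [Mseg, hR, hnil, append_nil, Qseg, hall]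
    refine (drop_suffix _ P).getLast!_eq ?_
    have := length_pos_iff.2 hP
    simp only [ne_eq, drop_eq_nil_iff]
    omega
  · rw [Mseg, hR, getLast!_append_of_ne_nil _ hne']
    exact hsuf.getLast!_eq hne'

end Enumeration

theorem confusion_le_sum_of_eq_append {V : Type} [Inhabited V] [Finite V] (G : V → V → Prop)
    {k : ℕ} (s t : Fin k → V) {M Q R : Fin k → List V} (hM : ∀ j, M j = Q j ++ R j) :
    Confusion G s t M ≤ ∑ ij : Fin k × Fin k,
      {v | (M ij.1).head! ≠ s ij.1 ∧ (M ij.2).getLast! ≠ t ij.2 ∧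
        Outward G (Q ij.1).tail v ∧ Inward G (R ij.2).dropLast v}.ncard := by
  refine (Set.ncard_le_ncard ?_ (Set.toFinite _)).trans (Set.ncard_iUnion_le_of_fintype _)
  rintro v ⟨⟨hvA, j, hj, hA⟩, ⟨hvB, i, hi, hB⟩⟩
  simp only [hM] at hvA hA hvB hB
  refine Set.mem_iUnion.2 ⟨(i, j), hi, hj, ⟨?_, ?_⟩, ?_, ?_⟩
  · exact fun hv => hvB i (mem_append_left _ (mem_of_mem_tail hv))
  · exact fun w hw => hB w (mem_tail_append_of_mem_tail hw)
  · exact fun hv => hvA j (mem_append_right _ (mem_of_mem_dropLast hv))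
  · exact fun w hw => hA w (mem_dropLast_append_of_mem_dropLast hw)

theorem stmt18_general {V : Type} [Fintype V] [DecidableEq V] [Inhabited V]
    (G : V → V → Prop)
    (d k : ℕ)
    (c0 m : ℕ) (hm : m = c0 * d + 1)
    (s t : Fin k → V)
    (L : Fin k → List V) (hL : IsLinkageFor G s t L)
    (e : List V) (henum : ∀ v, v ∈ e ↔ v ∈ LV L)
    (ha : ∀ h : Fin k, ∀ p q : Fin e.length,
      PEdge (L h) (e.get p) (e.get q) → (p : ℕ) < (q : ℕ))
    (hb : ∀ h i : Fin k, ∀ p : ℕ, 1 ≤ p → p ≤ e.length - 1 →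
      ∀ Q R : List V, Q <:+: (L h).filter (· ∈ e.take p) → Q.length = m - 1 →
        R <:+: (L i).filter (· ∈ e.drop p) → R.length = m - 1 →
        {v : V | Outward G Q v ∧ Inward G R v}.ncard ≤ c0 * (2*k+1)) :
    ∀ p ≤ e.length, Confusion G s t (fun j => Mseg m e p (L j)) ≤ c0 * (2*k+1) * k^2 := by
  intro p _
  obtain ⟨⟨hpath, -⟩, hends⟩ := hL
  have hmem (j : Fin k) : ∀ v ∈ L j, v ∈ e := fun v hv =>
    (henum v).2 (Finset.mem_biUnion.2 ⟨j, Finset.mem_univ j, mem_toFinset.2 hv⟩)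
  refine (confusion_le_sum_of_eq_append G s t (M := fun j => Mseg m e p (L j))
    fun _ => rfl).trans ?_
  calc _ ≤ ∑ _ij : Fin k × Fin k, c0 * (2*k+1) := Finset.sum_le_sum fun ⟨i, j⟩ _ => ?_
    _ = c0 * (2*k+1) * k^2 := by
      simp only [Finset.sum_const, Finset.card_univ, Fintype.card_prod, Fintype.card_fin,
        smul_eq_mul]
      ring
  refine Set.ncard_setOf_and_le fun hhead => Set.ncard_setOf_and_le fun hlast => ?_
  have hQ := Qseg_length_eq_of_head!_ne (hpath i).1 (hmem i)
    (filter_mem_take_isPrefix (hmem i) (ha i) p) (by rwa [(hends i).1])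
  have hR := Rseg_length_eq_of_getLast!_ne (hpath j).1 (hmem j)
    (filter_mem_drop_isSuffix (hmem j) (ha j) p) (by rwa [(hends j).2])
  have hm0 : 0 < m := hm ▸ Nat.succ_pos _
  have hp1 : 1 ≤ p := one_le_of_Qseg_ne_nil (ne_nil_of_length_pos (hm0.trans_eq hQ.symm))
  have hpn : p < e.length := lt_length_of_Rseg_ne_nil (ne_nil_of_length_pos (hm0.trans_eq hR.symm))
  exact hb i j p hp1 (by omega) _ _ Qseg_tail_isInfix (by simp [hQ]) Rseg_dropLast_isInfix
    (by simp [hR])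

theorem stmt18 {V : Type} [Fintype V] [DecidableEq V] [Inhabited V]
    (G : V → V → Prop) (hG : Irreflexive G)
    (d k : ℕ) (hd : 1 ≤ d) (hk : 1 ≤ k) (hdom : PathDominant d G)
    (c0 m : ℕ) (hc0 : c0 = (k-1)*d + k^2 + 2) (hm : m = c0 * d + 1)
    (s t : Fin k → V)
    (L : Fin k → List V) (hL : IsLinkageFor G s t L)
    (e : List V) (hnd : e.Nodup) (henum : ∀ v, v ∈ e ↔ v ∈ LV L)
    (ha : ∀ h : Fin k, ∀ p q : Fin e.length,
      PEdge (L h) (e.get p) (e.get q) → (p : ℕ) < (q : ℕ))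
    (hb : ∀ h i : Fin k, ∀ p : ℕ, 1 ≤ p → p ≤ e.length - 1 →
      ∀ Q R : List V, Q <:+: (L h).filter (· ∈ e.take p) → Q.length = m - 1 →
        R <:+: (L i).filter (· ∈ e.drop p) → R.length = m - 1 →
        {v : V | Outward G Q v ∧ Inward G R v}.ncard ≤ c0 * (2*k+1)) :
    ∀ p ≤ e.length, Confusion G s t (fun j => Mseg m e p (L j)) ≤ c0 * (2*k+1) * k^2 :=
  stmt18_general G d k c0 m hm s t L hL e henum ha hb
end
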